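/- For a prime p, non-negative integers n ≥ j with p ∣ C(n,j), class index i := i(n,j), and b := n+1 with base-p digits b_σ, setting T(i,b) := Σ_{σ≥i} b_σ p^σ, we have C(m, j) ≡ 0 mod p for all m with T(i,b) ≤ m ≤ n, while C(T(i,b) − 1, j) is not divisible by p. -/

import Mathlib

/-!
By Lucas' theorem, `p ∤ C(m, j)` exactly when every base-`p` digit of `j` is at most the
corresponding digit of `m`. Let `L` be the highest digit with `j_L > n_L` and `i` the first digit
above `L` with `j_i < n_i`. As `n_L < p - 1`, adding `1` to `n` carries no further than position
`L`, so `T = T(i, n + 1)` is `n` with its digits below `i` cleared.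

If `T ≤ m ≤ n`, then `m` agrees with `n` from position `i` on. Were `j` digitwise below `m`, then
`n_σ ≤ j_σ ≤ m_σ` for `L < σ < i` (by minimality of `i`) and `m_L ≥ j_L > n_L`, forcing `m > n`.
On the other hand `T - 1` has digits `p - 1` below `i`, `n_i - 1 ≥ j_i` at `i` and `n_σ ≥ j_σ`
above `i`, so it dominates `j` digitwise.
-/

/-- The σ-th digit of `x` in base `p`. -/
def digit (p x σ : ℕ) : ℕ := x / p ^ σ % p

/-- For a pair `(n,j)` with `p ∣ C(n,j)`, the class index `i` of `(n,j)`: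
with `L := max {σ | j_σ > n_σ}`, it is `i := min {σ | σ > L ∧ j_σ < n_σ}`. -/
noncomputable def classIdx (p n j : ℕ) : ℕ :=
  sInf {σ : ℕ | σ > sSup {τ : ℕ | digit p n τ < digit p j τ} ∧ digit p j σ < digit p n σ}

/-- The top line function `T(R,b) = Σ_{σ≥R} b_σ p^σ`. (Digits of `b` with index
`σ > b` vanish, so the sum over `R ≤ σ < b+1` is the full infinite sum.) -/
def topLine (p b R : ℕ) : ℕ := ∑ σ ∈ Finset.Ico R (b + 1), digit p b σ * p ^ σ

section Digits

variable {p : ℕ}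

lemma digit_lt (hp : 0 < p) (x σ : ℕ) : digit p x σ < p := Nat.mod_lt _ hp

lemma digit_zero (p x : ℕ) : digit p x 0 = x % p := by simp [digit]

lemma digit_div_pow (p x k σ : ℕ) : digit p (x / p ^ k) σ = digit p x (k + σ) := by
  rw [digit, digit, Nat.div_div_eq_div_mul, ← pow_add]

lemma digit_succ (p x σ : ℕ) : digit p x (σ + 1) = digit p (x / p) σ := by
  simpa [add_comm] using (digit_div_pow p x 1 σ).symm

lemma digit_eq_zero_of_lt_pow {x σ : ℕ} (h : x < p ^ σ) : digit p x σ = 0 := by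
  simp [digit, Nat.div_eq_of_lt h]

lemma digit_eq_of_div_pow_eq {x y k σ : ℕ} (h : x / p ^ k = y / p ^ k) (hσ : k ≤ σ) :
    digit p x σ = digit p y σ := by
  obtain ⟨τ, rfl⟩ := Nat.exists_eq_add_of_le hσ
  rw [← digit_div_pow, h, digit_div_pow]

lemma le_of_forall_digit_le (hp : 1 < p) {x y : ℕ} (h : ∀ σ, digit p x σ ≤ digit p y σ) :
    x ≤ y := by
  induction x using Nat.strong_induction_on generalizing y with
  | _ x ih =>
  rcases Nat.eq_zero_or_pos x with rfl | hx
  · exact Nat.zero_le y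
  have hdiv : x / p ≤ y / p :=
    ih _ (Nat.div_lt_self hx hp) fun σ => by simpa only [digit_succ] using h (σ + 1)
  have hmod : x % p ≤ y % p := by simpa only [digit_zero] using h 0
  calc x = p * (x / p) + x % p := (Nat.div_add_mod x p).symm
    _ ≤ p * (y / p) + y % p := add_le_add (Nat.mul_le_mul_left p hdiv) hmod
    _ = y := Nat.div_add_mod y p

lemma lt_of_digit_lt_of_forall_digit_le (hp : 1 < p) {x y L : ℕ}
    (hL : digit p x L < digit p y L) (h : ∀ σ, L < σ → digit p x σ ≤ digit p y σ) : x < y := by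
  have hhigh : x / p ^ L / p ≤ y / p ^ L / p := le_of_forall_digit_le hp fun σ => by
    simpa only [← digit_succ, digit_div_pow] using h (L + (σ + 1)) (by omega)
  refine Nat.lt_of_div_lt_div (c := p ^ L) ?_
  calc x / p ^ L = p * (x / p ^ L / p) + x / p ^ L % p := (Nat.div_add_mod _ p).symm
    _ < p * (y / p ^ L / p) + y / p ^ L % p :=
      Nat.add_lt_add_of_le_of_lt (Nat.mul_le_mul_left p hhigh) hL
    _ = y / p ^ L := Nat.div_add_mod _ p

lemma sum_range_digit_mul_pow (p x k : ℕ) :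
    ∑ σ ∈ Finset.range k, digit p x σ * p ^ σ = x % p ^ k := by
  induction k with
  | zero => simp [Nat.mod_one]
  | succ k ih => rw [Finset.sum_range_succ, ih, Nat.mod_pow_succ, digit, mul_comm]

lemma topLine_eq (hp : 1 < p) (b R : ℕ) : topLine p b R = p ^ R * (b / p ^ R) := by
  rcases le_or_gt R (b + 1) with hR | hR
  · have hsplit := Finset.sum_range_add_sum_Ico (fun σ => digit p b σ * p ^ σ) hR
    have hb : b < p ^ (b + 1) := (Nat.lt_succ_self b).trans (Nat.lt_pow_self hp)
    rw [sum_range_digit_mul_pow, sum_range_digit_mul_pow, Nat.mod_eq_of_lt hb] at hsplit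
    have := Nat.mod_add_div b (p ^ R)
    unfold topLine
    omega
  · have hb : b < p ^ R := (Nat.lt_of_succ_lt hR).trans (Nat.lt_pow_self hp)
    simp [topLine, Finset.Ico_eq_empty_of_le hR.le, Nat.div_eq_of_lt hb]

end Digits

section Predecessor

variable {p x : ℕ}

lemma sub_one_div_of_dvd {d : ℕ} (hd : d ∣ x) (hx : 0 < x) : (x - 1) / d = x / d - 1 := by
  obtain ⟨y, rfl⟩ := Nat.exists_eq_add_of_lt hx
  rw [zero_add] at hd
  simp [Nat.succ_div_of_dvd hd]

lemma sub_one_div_of_not_dvd {d : ℕ} (hd : ¬ d ∣ x) : (x - 1) / d = x / d := by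
  obtain ⟨y, rfl⟩ : ∃ y, x = y + 1 :=
    Nat.exists_eq_add_one.2 (Nat.pos_of_ne_zero fun hx => hd (hx ▸ dvd_zero d))
  simp [Nat.succ_div_of_not_dvd hd]

lemma sub_one_mod_of_dvd (hp : 0 < p) (hd : p ∣ x) (hx : 0 < x) : (x - 1) % p = p - 1 := by
  obtain ⟨c, rfl⟩ := hd
  obtain ⟨c, rfl⟩ := Nat.exists_eq_add_of_lt (Nat.pos_of_mul_pos_left hx)
  rw [show p * (0 + c + 1) - 1 = p - 1 + p * c by rw [zero_add, mul_add_one]; omega,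
    Nat.add_mul_mod_self_left, Nat.mod_eq_of_lt (Nat.sub_lt hp one_pos)]

lemma sub_one_mod_of_mod_ne_zero (hp : 0 < p) (hx : x % p ≠ 0) : (x - 1) % p = x % p - 1 := by
  have := Nat.mod_add_div x p
  rw [show x - 1 = x % p - 1 + p * (x / p) by omega, Nat.add_mul_mod_self_left,
    Nat.mod_eq_of_lt ((Nat.sub_le _ _).trans_lt (Nat.mod_lt x hp))]

lemma not_pow_dvd_of_digit_ne_zero {k σ : ℕ} (hx : digit p x k ≠ 0) (hσ : k < σ) :
    ¬ p ^ σ ∣ x := fun h => hx <| Nat.mod_eq_zero_of_dvd <| Nat.dvd_div_of_mul_dvd <|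
  (pow_succ p k ▸ pow_dvd_pow p hσ).trans h

lemma digit_sub_one_of_lt (hp : 0 < p) {k σ : ℕ} (hk : p ^ k ∣ x) (hx : 0 < x) (hσ : σ < k) :
    digit p (x - 1) σ = p - 1 := by
  have hσx : p ^ σ ∣ x := (pow_dvd_pow p hσ.le).trans hk
  rw [digit, sub_one_div_of_dvd hσx hx]
  exact sub_one_mod_of_dvd hp (Nat.dvd_div_of_mul_dvd ((pow_succ p σ ▸ pow_dvd_pow p hσ).trans hk))
    (Nat.div_pos (Nat.le_of_dvd hx hσx) (pow_pos hp σ))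

lemma digit_sub_one_self (hp : 0 < p) {k : ℕ} (hk : p ^ k ∣ x) (hx : digit p x k ≠ 0) :
    digit p (x - 1) k = digit p x k - 1 := by
  have hx0 : 0 < x := Nat.pos_of_ne_zero fun h => hx (by simp [h, digit])
  rw [digit, sub_one_div_of_dvd hk hx0]
  exact sub_one_mod_of_mod_ne_zero hp hx

lemma digit_sub_one_of_gt {k σ : ℕ} (hx : digit p x k ≠ 0) (hσ : k < σ) :
    digit p (x - 1) σ = digit p x σ := by
  rw [digit, digit, sub_one_div_of_not_dvd (not_pow_dvd_of_digit_ne_zero hx hσ)]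

end Predecessor

section Lucas

variable {p : ℕ}

theorem Nat.Prime.dvd_choose_iff_lt_of_lt (hp : p.Prime) {a b : ℕ} (ha : a < p) :
    p ∣ a.choose b ↔ a < b := by
  refine ⟨fun h => ?_, fun h => by rw [Nat.choose_eq_zero_of_lt h]; exact dvd_zero p⟩
  by_contra hba
  have hfac : a.choose b ∣ a.factorial := ⟨b.factorial * (a - b).factorial, by
    rw [← mul_assoc, Nat.choose_mul_factorial_mul_factorial (not_lt.1 hba)]⟩
  exact (not_le.2 ha) (hp.dvd_factorial.1 (h.trans hfac))

theorem Nat.Prime.dvd_choose_iff_exists_digit_lt (hp : p.Prime) (m j : ℕ) :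
    p ∣ m.choose j ↔ ∃ σ, digit p m σ < digit p j σ := by
  have : Fact p.Prime := ⟨hp⟩
  have hbound : m + j < p ^ (m + j) := Nat.lt_pow_self hp.one_lt
  rw [(Choose.choose_modEq_prod_range_choose_nat (a := m + j) (by omega) (by omega)).dvd_iff
    dvd_rfl, (Nat.prime_iff.1 hp).dvd_finsetProd_iff]
  constructor
  · rintro ⟨σ, -, hσ⟩
    exact ⟨σ, (hp.dvd_choose_iff_lt_of_lt (digit_lt hp.pos m σ)).1 hσ⟩
  · rintro ⟨σ, hσ⟩
    refine ⟨σ, Finset.mem_range.2 ?_, (hp.dvd_choose_iff_lt_of_lt (digit_lt hp.pos m σ)).2 hσ⟩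
    by_contra hσj
    have : digit p j σ = 0 :=
      digit_eq_zero_of_lt_pow ((show j < p ^ (m + j) by omega).trans_le
        (Nat.pow_le_pow_right hp.pos (not_lt.1 hσj)))
    omega

theorem Nat.Prime.not_dvd_choose_iff_forall_digit_le (hp : p.Prime) (m j : ℕ) :
    ¬ p ∣ m.choose j ↔ ∀ σ, digit p j σ ≤ digit p m σ := by
  simp [hp.dvd_choose_iff_exists_digit_lt]

end Lucas

/-- The index `L` of the paper: the highest digit at which `j` exceeds `n`. -/
noncomputable def excessIdx (p n j : ℕ) : ℕ := sSup {τ : ℕ | digit p n τ < digit p j τ}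

section ClassIdx

variable {p n j : ℕ}

lemma bddAbove_digit_lt_digit (hp : 1 < p) : BddAbove {τ : ℕ | digit p n τ < digit p j τ} := by
  refine ⟨j, fun τ hτ => ?_⟩
  have hj : p ^ τ ≤ j := not_lt.1 fun h => by
    rw [Set.mem_ofPred_eq, digit_eq_zero_of_lt_pow h] at hτ
    omega
  exact ((Nat.lt_pow_self hp).trans_le hj).le

lemma digit_lt_digit_excessIdx (hp : p.Prime) (hdvd : p ∣ n.choose j) :
    digit p n (excessIdx p n j) < digit p j (excessIdx p n j) :=
  Nat.sSup_mem ((hp.dvd_choose_iff_exists_digit_lt n j).1 hdvd) (bddAbove_digit_lt_digit hp.one_lt)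

lemma digit_le_digit_of_excessIdx_lt (hp : 1 < p) {σ : ℕ} (hσ : excessIdx p n j < σ) :
    digit p j σ ≤ digit p n σ :=
  not_lt.1 fun h => (le_csSup (bddAbove_digit_lt_digit hp) h).not_gt hσ

lemma classIdx_spec (hp : p.Prime) (hjn : j ≤ n) (hdvd : p ∣ n.choose j) :
    excessIdx p n j < classIdx p n j ∧ digit p j (classIdx p n j) < digit p n (classIdx p n j) := by
  refine Nat.sInf_mem (s := {σ | excessIdx p n j < σ ∧ digit p j σ < digit p n σ}) ?_
  by_contra hempty
  refine hjn.not_gt (lt_of_digit_lt_of_forall_digit_le hp.one_lt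
    (digit_lt_digit_excessIdx hp hdvd) fun σ hσ => not_lt.1 fun h => hempty ⟨σ, hσ, h⟩)

lemma digit_le_digit_of_lt_classIdx {σ : ℕ} (hL : excessIdx p n j < σ)
    (hσ : σ < classIdx p n j) : digit p n σ ≤ digit p j σ :=
  not_lt.1 fun h => Nat.notMem_of_lt_sInf hσ ⟨hL, h⟩

/-- Since `n_L < j_L ≤ p - 1`, adding `1` to `n` does not carry up to position `i`. -/
lemma succ_div_pow_classIdx (hp : p.Prime) (hjn : j ≤ n) (hdvd : p ∣ n.choose j) :
    (n + 1) / p ^ classIdx p n j = n / p ^ classIdx p n j := by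
  refine Nat.succ_div_of_not_dvd fun h => ?_
  have hL := digit_sub_one_of_lt hp.pos h n.succ_pos (classIdx_spec hp hjn hdvd).1
  rw [Nat.add_sub_cancel] at hL
  have := digit_lt_digit_excessIdx hp hdvd
  have := digit_lt hp.pos j (excessIdx p n j)
  omega

lemma topLine_classIdx (hp : p.Prime) (hjn : j ≤ n) (hdvd : p ∣ n.choose j) :
    topLine p (n + 1) (classIdx p n j) = p ^ classIdx p n j * (n / p ^ classIdx p n j) := by
  rw [topLine_eq hp.one_lt, succ_div_pow_classIdx hp hjn hdvd]

lemma dvd_choose_of_pow_classIdx_mul_le (hp : p.Prime) (hdvd : p ∣ n.choose j)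
    {m : ℕ} (hTm : p ^ classIdx p n j * (n / p ^ classIdx p n j) ≤ m) (hmn : m ≤ n) :
    p ∣ m.choose j := by
  set i := classIdx p n j
  by_contra hndvd
  have hjm := (hp.not_dvd_choose_iff_forall_digit_le m j).1 hndvd
  have hdiv : m / p ^ i = n / p ^ i :=
    le_antisymm (Nat.div_le_div_right hmn)
      ((Nat.le_div_iff_mul_le (pow_pos hp.pos i)).2 (mul_comm (p ^ i) _ ▸ hTm))
  refine hmn.not_gt (lt_of_digit_lt_of_forall_digit_le hp.one_lt
    ((digit_lt_digit_excessIdx hp hdvd).trans_le (hjm _)) fun σ hσ => ?_)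
  rcases lt_or_ge σ i with hσi | hσi
  · exact (digit_le_digit_of_lt_classIdx hσ hσi).trans (hjm σ)
  · exact (digit_eq_of_div_pow_eq hdiv hσi).ge

lemma not_dvd_choose_pow_classIdx_mul_sub_one (hp : p.Prime) (hjn : j ≤ n)
    (hdvd : p ∣ n.choose j) :
    ¬ p ∣ (p ^ classIdx p n j * (n / p ^ classIdx p n j) - 1).choose j := by
  obtain ⟨hLi, hji⟩ := classIdx_spec hp hjn hdvd
  set i := classIdx p n j
  have hdigit : ∀ σ, i ≤ σ → digit p (p ^ i * (n / p ^ i)) σ = digit p n σ :=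
    fun σ => digit_eq_of_div_pow_eq (Nat.mul_div_cancel_left _ (pow_pos hp.pos i))
  have hi : digit p (p ^ i * (n / p ^ i)) i ≠ 0 := by
    rw [hdigit i le_rfl]
    omega
  refine (hp.not_dvd_choose_iff_forall_digit_le _ j).2 fun σ => ?_
  rcases lt_trichotomy σ i with hσ | rfl | hσ
  · have hT : 0 < p ^ i * (n / p ^ i) := Nat.pos_of_ne_zero fun h => hi (by simp [h, digit])
    rw [digit_sub_one_of_lt hp.pos (dvd_mul_right _ _) hT hσ]
    have := digit_lt hp.pos j σ
    omega
  · rw [digit_sub_one_self hp.pos (dvd_mul_right _ _) hi, hdigit i le_rfl]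
    omega
  · rw [digit_sub_one_of_gt hi hσ, hdigit σ hσ.le]
    exact digit_le_digit_of_excessIdx_lt hp.one_lt (hLi.trans hσ)

end ClassIdx

/-- With `i` the class index of `(n,j)` and `b = n+1`: `C(m,j) ≡ 0 mod p` for all
`m` with `T(i,b) ≤ m ≤ n`, while `C(T(i,b) − 1, j)` is not divisible by `p`. -/
theorem topLine_property (p : ℕ) (hp : p.Prime) (n j : ℕ) (hjn : j ≤ n)
    (hdvd : p ∣ Nat.choose n j) :
    (∀ m : ℕ, topLine p (n + 1) (classIdx p n j) ≤ m → m ≤ n → p ∣ Nat.choose m j) ∧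
      ¬ p ∣ Nat.choose (topLine p (n + 1) (classIdx p n j) - 1) j := by
  rw [topLine_classIdx hp hjn hdvd]
  exact ⟨fun _ => dvd_choose_of_pow_classIdx_mul_le hp hdvd,
    not_dvd_choose_pow_classIdx_mul_sub_one hp hjn hdvd⟩
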